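/- Conversely, given real numbers w_i, w_j > 0, w_r, w_s with w_i w_j = w_r² + w_s², there exist v_i, v_j > 0 and an angle θ ∈ (−π, π] such that w_i = v_i², w_j = v_j², w_r = v_i v_j cos θ, and w_s = v_i v_j sin θ; namely v_i = √w_i, v_j = √w_j, θ = atan2(w_s, w_r). -/

import Mathlib

/-! The point `w_r + i w_s` has modulus `√(w_i w_j) = √w_i √w_j`, so its polar form
`‖z‖ (cos (arg z) + i sin (arg z))` is the required lifting. -/

open Complex

theorem Real.sqrt_mul_sqrt_eq_norm_of_mul_eq_normSq {a b : ℝ} (ha : 0 ≤ a) {z : ℂ}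
    (h : a * b = normSq z) : √a * √b = ‖z‖ := by
  rw [← Real.sqrt_mul ha, h, norm_def]

/-- Exactness of the lifting: any (w_i, w_j, w_r, w_s) with w_i, w_j > 0 and
w_i w_j = w_r² + w_s² arises from voltages v_i = √w_i, v_j = √w_j and an
angle θ = atan2(w_s, w_r) ∈ (−π, π]. -/
theorem stmt_6 (wi wj wr ws : ℝ) (hwi : 0 < wi) (hwj : 0 < wj)
    (h : wi * wj = wr ^ 2 + ws ^ 2) :
    ∃ vi vj θ : ℝ, 0 < vi ∧ 0 < vj ∧ θ ∈ Set.Ioc (-Real.pi) Real.pi ∧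
      vi = Real.sqrt wi ∧ vj = Real.sqrt wj ∧
      θ = Complex.arg ((wr : ℝ) + (ws : ℝ) * Complex.I) ∧
      wi = vi ^ 2 ∧ wj = vj ^ 2 ∧
      wr = vi * vj * Real.cos θ ∧ ws = vi * vj * Real.sin θ := by
  set z : ℂ := wr + ws * I
  have hnorm : √wi * √wj = ‖z‖ :=
    Real.sqrt_mul_sqrt_eq_norm_of_mul_eq_normSq hwi.le (by rw [normSq_add_mul_I, h])
  refine ⟨√wi, √wj, z.arg, Real.sqrt_pos.mpr hwi, Real.sqrt_pos.mpr hwj, arg_mem_Ioc z,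
    rfl, rfl, rfl, (Real.sq_sqrt hwi.le).symm, (Real.sq_sqrt hwj.le).symm, ?_, ?_⟩
  · rw [hnorm, norm_mul_cos_arg]
    simp [z]
  · rw [hnorm, norm_mul_sin_arg]
    simp [z]
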